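/- Let G be a group of order 9 acting on ℙ¹ × ℙ¹ × ℙ¹ such that the action is free outside a finite subset and permutes the three factors nontrivially. Then G ≅ ℤ/9ℤ, and there are affine coordinates x, y, z on the three copies of ℙ¹ such that a generator g of G acts by g(x, y, z) = (y, z, ωx), where ω is a primitive third root of unity. -/

import Mathlib

open scoped LinearAlgebra.Projectivization

noncomputable section

/-- The complex projective line `ℙ¹(ℂ)`; the affine coordinate of `(x₀:x₁)` is `x₁/x₀`. -/
abbrev P1 := ℙ ℂ (Fin 2 → ℂ)

/-- The projective transformation of `ℙ¹(ℂ)` induced by a linear automorphism of `ℂ²`. -/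
def projMap (φ : (Fin 2 → ℂ) ≃ₗ[ℂ] (Fin 2 → ℂ)) : P1 → P1 :=
  Projectivization.map φ.toLinearMap φ.injective

/-- The automorphism of `ℙ¹ × ℙ¹ × ℙ¹` that permutes the factors by `τ` and applies the
projective transformation induced by `φ i` on the `i`-th factor (automorphisms of
`(ℙ¹)³` are exactly the maps of this form). -/
def prodAuto (τ : Equiv.Perm (Fin 3))
    (φ : Fin 3 → ((Fin 2 → ℂ) ≃ₗ[ℂ] (Fin 2 → ℂ))) :
    (Fin 3 → P1) → (Fin 3 → P1) :=
  fun x i => projMap (φ (τ.symm i)) (x (τ.symm i))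

/-- The linear automorphism `diag(1, ω)` of `ℂ²`, inducing the affine map `x ↦ ωx`
on `ℙ¹`. -/
def scaleEquiv (ω : ℂˣ) : (Fin 2 → ℂ) ≃ₗ[ℂ] (Fin 2 → ℂ) :=
  LinearEquiv.piCongrRight fun i => LinearEquiv.smulOfUnit (![1, ω] i)

/-- The automorphism `g(x, y, z) = (y, z, ωx)` of `ℙ¹ × ℙ¹ × ℙ¹` (in affine
coordinates). -/
def stdMap (ω : ℂˣ) : (Fin 3 → P1) → (Fin 3 → P1) := fun x =>
  ![x 1, x 2, projMap (scaleEquiv ω) (x 0)]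

/-!
Writing `ρ g = prodAuto τ φ`, the permutation `τ` is determined by `ρ g`, so `g ↦ τ` is a
homomorphism `G → S₃`; its image is a nontrivial `3`-group, so some `g` acts as
`(x, y, z) ↦ (A y, B z, C x)`. Such a map fixes `(AB z, B z, z)` whenever `CAB z = z`, so
freeness forces `g³ ≠ 1`, and `g` generates `G ≅ ℤ/9`. Now `g³ = (ABC, BCA, CAB)`: the
projective map `N = ABC` satisfies `N³ = 1` (from `g⁹ = 1`) but `N ≠ 1` (else `g³` fixes every
point). A linear lift of `N` is then a non-scalar matrix with `N³ = d`, hence diagonalisable with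
eigenvalues `α, αω`. In an eigenbasis `P`, the coordinates `P, A⁻¹P, B⁻¹A⁻¹P` on the three
factors turn `g` into `(x, y, z) ↦ (y, z, ωx)`.
-/

open Polynomial

lemma IsPrimitiveRoot.X_pow_three_sub_C {K : Type*} [Field K] {ω : K} (hω : IsPrimitiveRoot ω 3)
    (α : K) :
    (X - C (α * ω)) * (X - C (α * ω ^ 2)) * (X - C α) = (X ^ 3 - C (α ^ 3) : K[X]) := by
  have h1 : 1 + C ω + C ω ^ 2 = (0 : K[X]) := by
    have h := hω.geom_sum_eq_zero (by norm_num)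
    simp only [Finset.sum_range_succ, Finset.sum_range_zero, zero_add, pow_zero, pow_one] at h
    rw [← C_1, ← C_pow, ← C_add, ← C_add, h, C_0]
  have h3 : C ω ^ 3 = (1 : K[X]) := by rw [← C_pow, hω.pow_eq_one, C_1]
  simp only [C_mul, C_pow]
  linear_combination (-C α * X ^ 2 + C α ^ 2 * X) * h1 + (C α ^ 2 * X - C α ^ 3) * h3

namespace Module.End

variable {K V : Type*} [Field K] [AddCommGroup V] [Module K V]

lemma HasEigenvector.pow_eq_of_pow_eq_smul {f : End K V} {α d : K} {v : V} {n : ℕ}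
    (hv : f.HasEigenvector α v) (hf : f ^ n = d • 1) : α ^ n = d :=
  smul_left_injective K hv.2 (by simpa [hf] using (hv.pow_apply n).symm)

theorem exists_hasEigenvector_mul_of_pow_three_eq_smul [IsAlgClosed K] [FiniteDimensional K V]
    [Nontrivial V] {f : End K V} {d ω : K} (hω : IsPrimitiveRoot ω 3) (hd : d ≠ 0)
    (hf : f ^ 3 = d • 1) (hns : ∀ a : K, f ≠ a • 1) :
    ∃ (α : K) (v w : V), α ≠ 0 ∧ f.HasEigenvector α v ∧ f.HasEigenvector (α * ω) w := by
  obtain ⟨α, hα⟩ := exists_eigenvalue f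
  obtain ⟨v, hv⟩ := hα.exists_hasEigenvector
  have hα3 := hv.pow_eq_of_pow_eq_smul hf
  have hα0 : α ≠ 0 := by rintro rfl; exact hd (by simp [← hα3])
  have hprod := congrArg (aeval f) (hω.X_pow_three_sub_C α)
  rw [map_mul, map_mul] at hprod
  simp only [map_sub, aeval_X, aeval_C, map_pow, hα3, hf, Algebra.algebraMap_eq_smul_one,
    sub_self] at hprod
  obtain ⟨w, hw⟩ : ∃ w, f.HasEigenvector (α * ω) w ∨ f.HasEigenvector (α * ω ^ 2) w := by
    -- otherwise the first two factors of `hprod` are injective, which forces `f = α • 1`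
    by_contra! h
    have hker : ∀ (c : K), (∀ w, ¬ f.HasEigenvector c w) → ∀ y, (f - c • 1) y = 0 → y = 0 :=
      fun c hc y hy => by_contra fun hy0 => hc y ⟨by simpa [sub_eq_zero] using hy, hy0⟩
    refine hns α (LinearMap.ext fun x => sub_eq_zero.mp ?_)
    refine hker _ (fun w => (h w).2) _ (hker _ (fun w => (h w).1) _ ?_)
    exact LinearMap.congr_fun hprod x
  rcases hw with hw | hw
  · exact ⟨α, v, w, hα0, hv, hw⟩
  · refine ⟨α * ω ^ 2, w, v, by simp [hα0, hω.ne_zero], hw, ?_⟩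
    rwa [mul_assoc, ← pow_succ, hω.pow_eq_one, mul_one]

theorem exists_basis_of_pow_three_eq_smul [IsAlgClosed K] (hV : finrank K V = 2)
    {f : End K V} {d ω : K} (hω : IsPrimitiveRoot ω 3) (hd : d ≠ 0)
    (hf : f ^ 3 = d • 1) (hns : ∀ a : K, f ≠ a • 1) :
    ∃ (b : Basis (Fin 2) K V) (α : K), α ≠ 0 ∧ f (b 0) = α • b 0 ∧ f (b 1) = (α * ω) • b 1 := by
  have : FiniteDimensional K V := .of_finrank_pos (by omega)
  have : Nontrivial V := Module.nontrivial_of_finrank_pos (R := K) (by omega)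
  obtain ⟨α, v, w, hα0, hv, hw⟩ := exists_hasEigenvector_mul_of_pow_three_eq_smul hω hd hf hns
  have hli : LinearIndependent K ![v, w] := by
    refine f.eigenvectors_linearIndependent' ![α, α * ω] ?_ _ fun i => by fin_cases i <;> assumption
    have hω1 : ω ≠ 1 := hω.ne_one (by norm_num)
    intro i j hij
    fin_cases i <;> fin_cases j <;> simp_all
  refine ⟨basisOfLinearIndependentOfCardEqFinrank hli (by simp [hV]), α, hα0, ?_, ?_⟩ <;>
    simp [hv.apply_eq_smul, hw.apply_eq_smul]

end Module.End

open Projectivization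

local notation "GL₂" => (Fin 2 → ℂ) ≃ₗ[ℂ] (Fin 2 → ℂ)

instance : Infinite P1 :=
  Infinite.of_injective (fun t : ℂ => mk ℂ ![1, t] (by simp [funext_iff])) fun s t hst => by
    obtain ⟨a, ha⟩ := (mk_eq_mk_iff _ _ _ _ _).mp hst
    have h0 := congrFun ha 0
    have h1 := congrFun ha 1
    simp_all [Units.smul_def]

lemma projMap_mk (e : GL₂) (v : Fin 2 → ℂ) (hv : v ≠ 0) :
    projMap e (mk ℂ v hv) = mk ℂ (e v) (e.map_ne_zero_iff.mpr hv) :=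
  map_mk _ _ v hv

lemma projMap_injective (e : GL₂) : Function.Injective (projMap e) :=
  map_injective _ _

lemma projMap_refl : projMap (LinearEquiv.refl ℂ (Fin 2 → ℂ)) = id :=
  map_id

lemma projMap_trans (e f : GL₂) :
    projMap (e.trans f) = projMap f ∘ projMap e :=
  map_comp e.toLinearMap e.injective f.toLinearMap f.injective

lemma projMap_apply_symm_apply (e : GL₂) (p : P1) :
    projMap e (projMap e.symm p) = p := by
  rw [← Function.comp_apply (f := projMap e), ← projMap_trans, e.symm_trans_self, projMap_refl,
    id]

lemma projMap_symm_apply_apply (e : GL₂) (p : P1) :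
    projMap e.symm (projMap e p) = p := by
  simpa using projMap_apply_symm_apply e.symm p

lemma projMap_eq_of_forall_eq_smul {e f : GL₂} {c : ℂ} (hc : c ≠ 0)
    (h : ∀ v, e v = c • f v) : projMap e = projMap f := by
  funext p
  induction p using Projectivization.ind with
  | h v hv =>
    rw [projMap_mk, projMap_mk, mk_eq_mk_iff]
    exact ⟨Units.mk0 c hc, (h v).symm⟩

lemma projMap_eq_id_iff (e : GL₂) :
    projMap e = id ↔ ∃ d : ℂ, e.toLinearMap = d • 1 := by
  constructor
  · intro h
    refine LinearMap.exists_eq_smul_id_of_forall_notLinearIndependent fun v => ?_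
    by_cases hv : v = 0
    · simp [hv, linearIndependent_fin2]
    · simpa [LinearIndependent.pair_iff' hv, mk_eq_mk_iff', projMap_mk] using
        congrFun h (mk ℂ v hv)
  · rintro ⟨d, hd⟩
    have hd0 : d ≠ 0 := by
      rintro rfl
      simpa using congrArg LinearMap.ker hd
    funext p
    induction p using Projectivization.ind with
    | h v hv =>
      rw [projMap_mk, id, mk_eq_mk_iff]
      exact ⟨Units.mk0 d hd0, (LinearMap.congr_fun hd v).symm⟩

lemma scaleEquiv_apply (ω : ℂˣ) (v : Fin 2 → ℂ) : scaleEquiv ω v = ![v 0, ω * v 1] := by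
  funext i
  fin_cases i <;> simp [scaleEquiv, LinearEquiv.smulOfUnit, Units.smul_def]

theorem exists_projMap_comp_eq_comp_scaleEquiv (N : GL₂)
    (h3 : (projMap N)^[3] = id) (h1 : projMap N ≠ id) :
    ∃ (P : GL₂) (ω : ℂˣ), IsPrimitiveRoot (ω : ℂ) 3 ∧
      projMap N ∘ projMap P = projMap P ∘ projMap (scaleEquiv ω) := by
  obtain ⟨d, hd⟩ := (projMap_eq_id_iff ((N.trans N).trans N)).mp (by
    rwa [projMap_trans, projMap_trans])
  have hf : N.toLinearMap ^ 3 = d • 1 := by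
    rw [← hd]
    ext v
    simp [pow_succ]
  have hd0 : d ≠ 0 := by
    rintro rfl
    simpa using LinearMap.congr_fun hd (Pi.single 0 1)
  have hns : ∀ a : ℂ, N.toLinearMap ≠ a • 1 := fun a ha => h1 ((projMap_eq_id_iff N).mpr ⟨a, ha⟩)
  have hω := Complex.isPrimitiveRoot_exp 3 (by norm_num)
  obtain ⟨b, α, hα0, hb0, hb1⟩ :=
    Module.End.exists_basis_of_pow_three_eq_smul (by simp) hω hd0 hf hns
  refine ⟨b.equivFun.symm, Units.mk0 _ (hω.ne_zero (by norm_num)), hω, ?_⟩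
  rw [← projMap_trans, ← projMap_trans]
  refine projMap_eq_of_forall_eq_smul hα0 fun v => ?_
  simp only [LinearEquiv.coe_coe] at hb0 hb1
  simp [Module.Basis.equivFun_symm_apply, Fin.sum_univ_two, hb0, hb1, scaleEquiv_apply, smul_smul]
  module

def cycleMap {X : Type*} (a b c : X → X) (x : Fin 3 → X) : Fin 3 → X :=
  ![a (x 1), b (x 2), c (x 0)]

section cycleMap

variable {X : Type*} (a b c : X → X)

lemma cycleMap_ne_id [Nontrivial X] : cycleMap a b c ≠ id := fun h => by
  obtain ⟨p⟩ := ‹Nontrivial X›.to_nonempty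
  obtain ⟨y, hy⟩ := exists_ne (a p)
  exact hy (congrFun (congrFun h ![y, p, p]) 0).symm

lemma cycleMap_iterate_three :
    (cycleMap a b c)^[3] = fun x => ![a (b (c (x 0))), b (c (a (x 1))), c (a (b (x 2)))] := by
  funext x i
  fin_cases i <;> rfl

lemma cycleMap_iterate_three_eq_id (ha : a.Injective) (hb : b.Injective)
    (h : ∀ p, a (b (c p)) = p) : (cycleMap a b c)^[3] = id := by
  have h' : ∀ q, b (c (a q)) = q := fun q => ha (h (a q))
  have h'' : ∀ r, c (a (b r)) = r := fun r => hb (h' (b r))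
  rw [cycleMap_iterate_three]
  funext x i
  fin_cases i <;> simp [h, h', h'']

lemma cycleMap_iterate_three_mul_apply_zero (n : ℕ) (x : Fin 3 → X) :
    (cycleMap a b c)^[3 * n] x 0 = (a ∘ b ∘ c)^[n] (x 0) := by
  induction n with
  | zero => rfl
  | succ n ih =>
    rw [mul_add, mul_one, add_comm, Function.iterate_add_apply, cycleMap_iterate_three,
      Function.iterate_succ_apply']
    simp [ih]

lemma infinite_setOf_cycleMap_eq_self [Infinite X] (h : ∀ z, c (a (b z)) = z) :
    {x | cycleMap a b c x = x}.Infinite := by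
  refine Set.infinite_of_injective_forall_mem (f := fun z => ![a (b z), b z, z])
    (fun y z hyz => by simpa using congrFun hyz 2) fun z => ?_
  funext i
  fin_cases i <;> simp [cycleMap, h]

end cycleMap

lemma prodAuto_comp (τ σ : Equiv.Perm (Fin 3)) (φ χ : Fin 3 → GL₂) :
    prodAuto τ φ ∘ prodAuto σ χ = prodAuto (τ * σ) fun j => (χ j).trans (φ (σ j)) := by
  funext x i
  simp [prodAuto, projMap_trans, Equiv.Perm.mul_def]

lemma eq_of_prodAuto_eq {τ σ : Equiv.Perm (Fin 3)} {φ χ : Fin 3 → GL₂}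
    (h : prodAuto τ φ = prodAuto σ χ) : τ = σ := by
  by_contra hne
  obtain ⟨i, hi⟩ : ∃ i, τ.symm i ≠ σ.symm i := by
    by_contra! h'
    exact hne (Equiv.symm_bijective.injective (Equiv.ext h'))
  obtain ⟨p, q, hpq⟩ := exists_pair_ne P1
  have e1 := congrFun (congrFun h (Function.update (fun _ => q) (τ.symm i) p)) i
  have e2 := congrFun (congrFun h fun _ => q) i
  simp only [prodAuto, Function.update_self, Function.update_of_ne hi.symm] at e1 e2
  exact hpq (projMap_injective _ (e1.trans e2.symm))

theorem exists_permHom_of_forall_eq_prodAuto {G : Type*} [Group G]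
    (ρ : G →* Equiv.Perm (Fin 3 → P1))
    (h : ∀ g : G, ∃ (τ : Equiv.Perm (Fin 3)) (φ : Fin 3 → GL₂),
      ⇑(ρ g) = prodAuto τ φ) :
    ∃ π : G →* Equiv.Perm (Fin 3), ∀ g τ φ, ⇑(ρ g) = prodAuto τ φ → π g = τ := by
  choose τ φ hρ using h
  have hτ : ∀ g σ χ, ⇑(ρ g) = prodAuto σ χ → τ g = σ := fun g σ χ h =>
    eq_of_prodAuto_eq ((hρ g).symm.trans h)
  refine ⟨MonoidHom.mk' τ fun a b => hτ _ _ (fun j => (φ b j).trans (φ a (τ b j))) ?_, hτ⟩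
  rw [map_mul, Equiv.Perm.coe_mul, hρ a, hρ b, prodAuto_comp]

lemma prodAuto_finRotate_inv (φ : Fin 3 → GL₂) :
    prodAuto (finRotate 3)⁻¹ φ = cycleMap (projMap (φ 1)) (projMap (φ 2)) (projMap (φ 0)) := by
  funext x i
  fin_cases i <;> rfl

lemma cycleMap_projMap_conj (a b c P : GL₂) (ω : ℂˣ)
    (h : projMap ((c.trans b).trans a) ∘ projMap P = projMap P ∘ projMap (scaleEquiv ω))
    (x : Fin 3 → P1) :
    let ψ := ![P, P.trans a.symm, (P.trans a.symm).trans b.symm]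
    cycleMap (projMap a) (projMap b) (projMap c) (fun i => projMap (ψ i) (x i)) =
      fun i => projMap (ψ i) (stdMap ω x i) := by
  have h0 := congrFun h (x 0)
  simp only [projMap_trans, Function.comp_apply] at h0
  funext i
  fin_cases i <;>
    simp [cycleMap, stdMap, projMap_trans, projMap_apply_symm_apply, projMap_symm_apply_apply, ← h0]

set_option maxRecDepth 10000 in
lemma Equiv.Perm.eq_finRotate_or_inv_of_pow_nine {τ : Equiv.Perm (Fin 3)} (h9 : τ ^ 9 = 1)
    (h1 : τ ≠ 1) : τ = finRotate 3 ∨ τ = (finRotate 3)⁻¹ := by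
  revert τ
  decide

lemma forall_mem_zpowers_of_pow_ne_one {G : Type*} [Group G] {p n : ℕ} [Fact p.Prime]
    (hG : Nat.card G = p ^ (n + 1)) {g : G} (hg : ¬ g ^ p ^ n = 1) :
    ∀ h, h ∈ Subgroup.zpowers g := by
  have : Finite G := Nat.finite_of_card_ne_zero (by simp [hG, (Fact.out : p.Prime).ne_zero])
  have hord : orderOf g = p ^ (n + 1) := orderOf_eq_prime_pow hg (hG ▸ pow_card_eq_one')
  have htop : Subgroup.zpowers g = ⊤ :=
    Subgroup.eq_top_of_card_eq _ (by rw [Nat.card_zpowers, hord, hG])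
  exact fun h => htop ▸ Subgroup.mem_top h

lemma exists_map_eq_finRotate_inv {G : Type*} [Group G] (hG : Nat.card G = 9)
    (π : G →* Equiv.Perm (Fin 3)) {g : G} (hg : π g ≠ 1) : ∃ g, π g = (finRotate 3)⁻¹ := by
  have : Finite G := Nat.finite_of_card_ne_zero (by omega)
  have h9 : π g ^ 9 = 1 := by rw [← map_pow, ← hG, pow_card_eq_one', map_one]
  rcases Equiv.Perm.eq_finRotate_or_inv_of_pow_nine h9 hg with h | h
  · exact ⟨g⁻¹, by rw [map_inv, h]⟩
  · exact ⟨g, h⟩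

lemma exists_coe_eq_cycleMap {G : Type*} [Group G] (hG : Nat.card G = 9)
    (ρ : G →* Equiv.Perm (Fin 3 → P1))
    (hauto : ∀ g : G, ∃ (τ : Equiv.Perm (Fin 3)) (φ : Fin 3 → GL₂), ⇑(ρ g) = prodAuto τ φ)
    (hperm : ∃ (g : G) (τ : Equiv.Perm (Fin 3)) (φ : Fin 3 → GL₂),
      ⇑(ρ g) = prodAuto τ φ ∧ τ ≠ 1) :
    ∃ (g : G) (φ : Fin 3 → GL₂),
      ⇑(ρ g) = cycleMap (projMap (φ 1)) (projMap (φ 2)) (projMap (φ 0)) := by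
  obtain ⟨π, hπ⟩ := exists_permHom_of_forall_eq_prodAuto ρ hauto
  obtain ⟨g₀, τ₀, φ₀, hg₀, hτ₀⟩ := hperm
  obtain ⟨g, hg⟩ := exists_map_eq_finRotate_inv hG π (g := g₀) (by rwa [hπ _ _ _ hg₀])
  obtain ⟨τ, φ, hφ⟩ := hauto g
  exact ⟨g, φ, by rw [hφ, ← hπ _ _ _ hφ, hg, prodAuto_finRotate_inv]⟩

section cycleAction

variable {G X : Type*} [Group G] {ρ : G →* Equiv.Perm (Fin 3 → X)} {g : G} {a b c : X → X}

lemma pow_three_ne_one_of_coe_eq_cycleMap [Infinite X]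
    (hfree : ∀ g : G, g ≠ 1 → {x | ρ g x = x}.Finite) (hg : ⇑(ρ g) = cycleMap a b c) :
    g ^ 3 ≠ 1 := fun h3 => by
  have hg1 : g ≠ 1 := by
    rintro rfl
    exact cycleMap_ne_id a b c (by rw [← hg, map_one, Equiv.Perm.coe_one])
  have hF3 : (cycleMap a b c)^[3] = id := by
    rw [← hg, ← Equiv.Perm.coe_pow, ← map_pow, h3, map_one, Equiv.Perm.coe_one]
  rw [cycleMap_iterate_three] at hF3
  refine infinite_setOf_cycleMap_eq_self a b c (fun z => ?_) (hg ▸ hfree g hg1)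
  simpa using congrFun (congrFun hF3 fun _ => z) 2

lemma comp_ne_id_of_coe_eq_cycleMap [Infinite X]
    (hfree : ∀ g : G, g ≠ 1 → {x | ρ g x = x}.Finite) (hg : ⇑(ρ g) = cycleMap a b c)
    (ha : a.Injective) (hb : b.Injective) : a ∘ b ∘ c ≠ id := fun h => by
  have hfin := hfree _ (pow_three_ne_one_of_coe_eq_cycleMap hfree hg)
  rw [map_pow, Equiv.Perm.coe_pow, hg, cycleMap_iterate_three_eq_id a b c ha hb (congrFun h)]
    at hfin
  exact Set.infinite_univ (by simpa using hfin)

lemma iterate_comp_eq_id_of_coe_eq_cycleMap (hg : ⇑(ρ g) = cycleMap a b c) (h9 : g ^ 9 = 1) :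
    (a ∘ b ∘ c)^[3] = id := by
  have hF9 : (cycleMap a b c)^[3 * 3] = id := by
    rw [← hg, ← Equiv.Perm.coe_pow, ← map_pow, h9, map_one, Equiv.Perm.coe_one]
  funext p
  have h0 := cycleMap_iterate_three_mul_apply_zero a b c 3 fun _ => p
  rw [hF9] at h0
  exact h0.symm

end cycleAction

/-- Let `G` be a group of order 9 acting on `ℙ¹ × ℙ¹ × ℙ¹` (by automorphisms, i.e. by
per-factor projective transformations composed with permutations of the factors), such
that the action is free outside a finite subset and permutes the three factors
nontrivially.  Then `G ≅ ℤ/9ℤ`, and there are affine coordinates on the three copies of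
`ℙ¹` (i.e. per-factor changes of coordinates `ψ i`) such that a generator `g` of `G`
acts by `g(x, y, z) = (y, z, ωx)`, where `ω` is a primitive third root of unity. -/
theorem order_nine_action_on_P1_cubed
    (G : Type*) [Group G] (hG : Nat.card G = 9)
    (ρ : G →* Equiv.Perm (Fin 3 → P1))
    -- the action is by automorphisms of `ℙ¹ × ℙ¹ × ℙ¹`
    (hauto : ∀ g : G, ∃ (τ : Equiv.Perm (Fin 3))
      (φ : Fin 3 → ((Fin 2 → ℂ) ≃ₗ[ℂ] (Fin 2 → ℂ))), ⇑(ρ g) = prodAuto τ φ)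
    -- the action permutes the three factors nontrivially
    (hperm : ∃ (g : G) (τ : Equiv.Perm (Fin 3))
      (φ : Fin 3 → ((Fin 2 → ℂ) ≃ₗ[ℂ] (Fin 2 → ℂ))), ⇑(ρ g) = prodAuto τ φ ∧ τ ≠ 1)
    -- the action is free outside a finite subset
    (hfree : ∀ g : G, g ≠ 1 → {x : Fin 3 → P1 | ρ g x = x}.Finite) :
    Nonempty (G ≃* Multiplicative (ZMod 9)) ∧
    ∃ g : G, (∀ h : G, h ∈ Subgroup.zpowers g) ∧
      ∃ (ψ : Fin 3 → ((Fin 2 → ℂ) ≃ₗ[ℂ] (Fin 2 → ℂ))) (ω : ℂˣ),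
        IsPrimitiveRoot (ω : ℂ) 3 ∧
        ∀ x : Fin 3 → P1,
          ρ g (fun i => projMap (ψ i) (x i)) =
            fun i => projMap (ψ i) (stdMap ω x i) := by
  obtain ⟨g, φ, hg⟩ := exists_coe_eq_cycleMap hG ρ hauto hperm
  have hg3 := pow_three_ne_one_of_coe_eq_cycleMap hfree hg
  have hgen := forall_mem_zpowers_of_pow_ne_one hG (n := 1) (by rwa [pow_one])
  refine ⟨⟨hG ▸ (zmodCyclicMulEquiv ⟨g, fun h => Subgroup.mem_zpowers_iff.mp (hgen h)⟩).symm⟩,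
    g, hgen, ?_⟩
  have hN : projMap (((φ 0).trans (φ 2)).trans (φ 1)) =
      projMap (φ 1) ∘ projMap (φ 2) ∘ projMap (φ 0) := by
    rw [projMap_trans, projMap_trans]
  have hg9 : g ^ 9 = 1 := by
    have : Finite G := Nat.finite_of_card_ne_zero (by omega)
    rw [← hG, pow_card_eq_one']
  obtain ⟨P, ω, hω, hP⟩ := exists_projMap_comp_eq_comp_scaleEquiv _
    (hN ▸ iterate_comp_eq_id_of_coe_eq_cycleMap hg hg9)
    (hN ▸ comp_ne_id_of_coe_eq_cycleMap hfree hg (projMap_injective _) (projMap_injective _))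
  exact ⟨_, ω, hω, fun x => by rw [hg]; exact cycleMap_projMap_conj _ _ _ P ω hP x⟩

end
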